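/- The ideal m₂ = {(a, b, c) ∈ W : a is even} of W equals each of the three contracted ideals ((2, 1, 1)·R) ∩ W, ((1, √2, 1)·R) ∩ W, and ((1, 1, 1+√3)·R) ∩ W, where (x)·R denotes the principal ideal of R generated by x. -/

import Mathlib

abbrev Rng : Type := ℤ × Zsqrtd 2 × Zsqrtd 3

def Wset : Set Rng :=
  {p | p.1 ≡ p.2.1.re [ZMOD 2] ∧ p.1 ≡ p.2.2.re + p.2.2.im [ZMOD 2] ∧
       p.2.1.im ≡ p.2.2.im [ZMOD 2]}

private lemma modeq_iff (a b : ℤ) : a ≡ b [ZMOD 2] ↔ ((a : ZMod 2) = b) :=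
  (ZMod.intCast_eq_intCast_iff a b 2).symm

def W : Subring Rng where
  carrier := Wset
  zero_mem' := by refine ⟨?_, ?_, ?_⟩ <;> decide
  one_mem' := by refine ⟨?_, ?_, ?_⟩ <;> decide
  add_mem' := by
    rintro a b ⟨h1, h2, h3⟩ ⟨g1, g2, g3⟩
    refine ⟨h1.add g1, ?_, h3.add g3⟩
    simpa [add_add_add_comm] using h2.add g2
  neg_mem' := by
    rintro a ⟨h1, h2, h3⟩
    refine ⟨h1.neg, ?_, h3.neg⟩
    have := h2.neg
    simp only [Wset, Set.mem_setOf_eq, Prod.fst_neg, Prod.snd_neg, Zsqrtd.re_neg,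
      Zsqrtd.im_neg, Int.modEq_iff_dvd] at this ⊢
    omega
  mul_mem' := by
    rintro a b ⟨h1, h2, h3⟩ ⟨g1, g2, g3⟩
    simp only [Wset, Set.mem_setOf_eq, Prod.fst_mul, Prod.snd_mul, Zsqrtd.re_mul,
      Zsqrtd.im_mul, modeq_iff] at h1 h2 h3 g1 g2 g3 ⊢
    push_cast at h1 h2 h3 g1 g2 g3 ⊢
    have h0 : (2 : ZMod 2) = 0 := rfl
    refine ⟨?_, ?_, ?_⟩
    · rw [← h1, ← g1, h0]; ring
    · linear_combination (b.1 : ZMod 2) * h2 + ((a.2.2.re : ZMod 2) + a.2.2.im) * g2 -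
        ((a.2.2.im : ZMod 2) * b.2.2.im) * h0
    · linear_combination (b.2.1.im : ZMod 2) * h2 - (b.2.1.im : ZMod 2) * h1
        + (b.2.1.re : ZMod 2) * h3 + ((a.2.2.re : ZMod 2) + a.2.2.im) * g3
        + (a.2.2.im : ZMod 2) * g2 - (a.2.2.im : ZMod 2) * g1
        + ((a.2.2.im : ZMod 2) * b.2.2.im) * h0

lemma mem_W_iff (x : Rng) : x ∈ W ↔ x ∈ Wset := Iff.rfl

/-- The ideal `m₂ = {(a, b, c) ∈ W : a is even}` of `W`. -/
def m2 : Ideal W where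
  carrier := {x | Even ((x : Rng).1)}
  zero_mem' := Even.zero
  add_mem' := fun hx hy => hx.add hy
  smul_mem' := fun c x hx => hx.mul_left ((c : Rng).1)


/-!
Divisibility in `ℤ × ℤ[√2] × ℤ[√3]` is componentwise. Since `√d (x + y√d) = dy + x√d` and
`(1 + √d)(x + y√d) = (x + dy) + (x + y)√d`, the three generators divide `(a, b, c)` exactly when
`2 ∣ a`, `2 ∣ b₁`, resp. `2 ∣ c₁ - c₂`; on `W` all three conditions agree with `2 ∣ a`.
-/

namespace Zsqrtd

variable {d : ℤ}

theorem sqrtd_dvd_iff (z : ℤ√d) : sqrtd ∣ z ↔ d ∣ z.re := by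
  constructor
  · rintro ⟨w, rfl⟩
    exact ⟨w.im, by simp⟩
  · rintro ⟨k, hk⟩
    exact ⟨⟨z.im, k⟩, by ext <;> simp [hk]⟩

theorem one_add_sqrtd_dvd_iff (z : ℤ√d) : 1 + sqrtd ∣ z ↔ d - 1 ∣ z.re - z.im := by
  constructor
  · rintro ⟨w, rfl⟩
    exact ⟨w.im, by simp; ring⟩
  · rintro ⟨k, hk⟩
    exact ⟨⟨z.im - k, k⟩, by ext <;> simp; linarith⟩

end Zsqrtd

theorem Int.ModEq.two_dvd_iff {a b : ℤ} (h : a ≡ b [ZMOD 2]) : 2 ∣ a ↔ 2 ∣ b := by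
  simp only [Int.dvd_iff_emod_eq_zero, h.eq]

theorem mem_m2_iff {x : W} : x ∈ m2 ↔ 2 ∣ (x : Rng).1 :=
  even_iff_two_dvd

theorem mem_comap_span_singleton_iff (p : Rng) (x : W) :
    x ∈ Ideal.comap W.subtype (Ideal.span {p}) ↔ p ∣ (x : Rng) :=
  Ideal.mem_span_singleton

/-- `m₂` equals each of the contracted ideals `((2,1,1)·R) ∩ W`, `((1,√2,1)·R) ∩ W`,
`((1,1,1+√3)·R) ∩ W`. -/
theorem stmt7 :
    m2 = Ideal.comap W.subtype
        (Ideal.span {(((2 : ℤ), (1 : Zsqrtd 2), (1 : Zsqrtd 3)) : Rng)}) ∧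
    m2 = Ideal.comap W.subtype
        (Ideal.span {(((1 : ℤ), (Zsqrtd.sqrtd : Zsqrtd 2), (1 : Zsqrtd 3)) : Rng)}) ∧
    m2 = Ideal.comap W.subtype
        (Ideal.span {(((1 : ℤ), (1 : Zsqrtd 2), (1 + Zsqrtd.sqrtd : Zsqrtd 3)) : Rng)}) := by
  refine ⟨?_, ?_, ?_⟩ <;> ext ⟨⟨a, b, c⟩, hab, hac, -⟩ <;>
    simp only [mem_m2_iff, mem_comap_span_singleton_iff, Prod.mk_dvd_mk, one_dvd, and_true,
      true_and]
  · exact hab.two_dvd_iff.trans (Zsqrtd.sqrtd_dvd_iff b).symm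
  · rw [Zsqrtd.one_add_sqrtd_dvd_iff, hac.two_dvd_iff]
    dsimp only
    omega
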